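/- arXiv:1406.7612 — 2 statements merged into one kernel-verified Lean document; each statement's English description precedes it below -/
import Mathlib

section
/- (Generic symmetric case.) Assume λ_{1,0} = λ_{2,0} = λ_{5,0} = 0, λ_{4,0}(λ_{3,0} − λ_{6,0}) ≠ 0, and (λ_{4,0}+5λ_{3,0}−5λ_{6,0})² + (λ_{3,0}λ_{6,0}−2λ_{6,0}²)² ≠ 0. Let k ≥ 1 be an integer and suppose v̄_{1,j} = v̄_{3,j} = v̄_{5,j} = v̄_{7,j} = 0 for all 0 ≤ j ≤ k−1. Then v̄_{1,k} = λ_{1,k}, v̄_{3,k} = (λ_{3,0} − λ_{6,0}) λ_{5,k}, v̄_{5,k} = λ_{4,0}(λ_{3,0} − λ_{6,0})(λ_{4,0}+5λ_{3,0}−5λ_{6,0}) λ_{2,k}, and v̄_{7,k} = λ_{4,0}(λ_{3,0} − λ_{6,0})²(λ_{3,0}λ_{6,0}−2λ_{6,0}²) λ_{2,k}. -/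
open PowerSeries

/-
Write each Liapunov constant as one small parameter times a cofactor: v₃ = λ₅ · (λ₃ − λ₆),
v₅ = λ₂ · c₅ and v₇ = λ₂ · c₇. The genericity conditions make the constant term of
λ₃ − λ₆, and of at least one of c₅, c₇, nonzero, so that cofactor is a unit of ℝ⟦ε⟧ and
εᵏ ∣ v₃, v₅, v₇ forces εᵏ ∣ λ₅ and εᵏ ∣ λ₂. Once εᵏ divides the small factor, the coefficient
of εᵏ in the product is its leading coefficient times the constant term of the cofactor.
-/

namespace PowerSeries

variable {R : Type*} {k : ℕ}

theorem coeff_mul_of_X_pow_dvd [Semiring R] {f g : R⟦X⟧} (hf : X ^ k ∣ f) :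
    coeff k (f * g) = coeff k f * coeff 0 g := by
  obtain ⟨f, rfl⟩ := hf
  simp [mul_assoc, coeff_X_pow_mul']

theorem X_pow_dvd_of_X_pow_dvd_mul [Ring R] {f g : R⟦X⟧} (hg : IsUnit (constantCoeff g))
    (h : X ^ k ∣ f * g) : X ^ k ∣ f :=
  (isUnit_iff_constantCoeff.2 hg).dvd_mul_right.1 h

end PowerSeries

theorem generic_symmetric_general
    (l1 l2 l3 l4 l5 l6 : PowerSeries ℝ)
    (v1 v3 v5 v7 : PowerSeries ℝ)
    (hv1 : v1 = l1)
    (hv3 : v3 = l5 * (l3 - l6))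
    (hv5 : v5 = l2 * l4 * (l3 - l6) * (l4 + 5 * l3 - 5 * l6))
    (hv7 : v7 = l2 * l4 * (l3 - l6) ^ 2 * (l3 * l6 - 2 * l6 ^ 2 - l2 ^ 2))
    (h20 : coeff 0 l2 = 0)
    (hgen1 : coeff 0 l4 * (coeff 0 l3 - coeff 0 l6) ≠ 0)
    (hgen2 : (coeff 0 l4 + 5 * coeff 0 l3 - 5 * coeff 0 l6) ^ 2
        + (coeff 0 l3 * coeff 0 l6 - 2 * (coeff 0 l6) ^ 2) ^ 2 ≠ 0)
    (k : ℕ)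
    (hvan : ∀ j < k, coeff j v1 = 0 ∧ coeff j v3 = 0 ∧ coeff j v5 = 0 ∧ coeff j v7 = 0) :
    coeff k v1 = coeff k l1 ∧
    coeff k v3 = (coeff 0 l3 - coeff 0 l6) * coeff k l5 ∧
    coeff k v5 = coeff 0 l4 * (coeff 0 l3 - coeff 0 l6)
      * (coeff 0 l4 + 5 * coeff 0 l3 - 5 * coeff 0 l6) * coeff k l2 ∧
    coeff k v7 = coeff 0 l4 * (coeff 0 l3 - coeff 0 l6) ^ 2
      * (coeff 0 l3 * coeff 0 l6 - 2 * (coeff 0 l6) ^ 2) * coeff k l2 := by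
  simp only [coeff_zero_eq_constantCoeff_apply] at *
  set c5 := l4 * (l3 - l6) * (l4 + 5 * l3 - 5 * l6)
  set c7 := l4 * (l3 - l6) ^ 2 * (l3 * l6 - 2 * l6 ^ 2 - l2 ^ 2)
  have hv5' : v5 = l2 * c5 := by rw [hv5]; ring
  have hv7' : v7 = l2 * c7 := by rw [hv7]; ring
  have hc5 : constantCoeff c5 = constantCoeff l4 * (constantCoeff l3 - constantCoeff l6)
      * (constantCoeff l4 + 5 * constantCoeff l3 - 5 * constantCoeff l6) := by
    simp [c5, map_ofNat]
  have hc7 : constantCoeff c7 = constantCoeff l4 * (constantCoeff l3 - constantCoeff l6) ^ 2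
      * (constantCoeff l3 * constantCoeff l6 - 2 * constantCoeff l6 ^ 2) := by
    simp [c7, h20, map_ofNat]
  have hv3k : X ^ k ∣ v3 := X_pow_dvd_iff.2 fun j hj => (hvan j hj).2.1
  have hv5k : X ^ k ∣ v5 := X_pow_dvd_iff.2 fun j hj => (hvan j hj).2.2.1
  have hv7k : X ^ k ∣ v7 := X_pow_dvd_iff.2 fun j hj => (hvan j hj).2.2.2
  obtain ⟨h4, h36⟩ := mul_ne_zero_iff.1 hgen1
  have hl5 : X ^ k ∣ l5 :=
    X_pow_dvd_of_X_pow_dvd_mul (by simpa using h36) (hv3 ▸ hv3k)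
  have hl2 : X ^ k ∣ l2 := by
    by_cases hA : constantCoeff l4 + 5 * constantCoeff l3 - 5 * constantCoeff l6 = 0
    · have hB : constantCoeff l3 * constantCoeff l6 - 2 * constantCoeff l6 ^ 2 ≠ 0 := by
        rintro hB; exact hgen2 (by rw [hA, hB]; ring)
      exact X_pow_dvd_of_X_pow_dvd_mul (by simp [hc7, h4, h36, hB]) (hv7' ▸ hv7k)
    · exact X_pow_dvd_of_X_pow_dvd_mul (by simp [hc5, h4, h36, hA]) (hv5' ▸ hv5k)
  refine ⟨by rw [hv1], ?_, ?_, ?_⟩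
  · rw [hv3, coeff_mul_of_X_pow_dvd hl5]; simp [mul_comm]
  · rw [hv5', coeff_mul_of_X_pow_dvd hl2, coeff_zero_eq_constantCoeff_apply, hc5, mul_comm]
  · rw [hv7', coeff_mul_of_X_pow_dvd hl2, coeff_zero_eq_constantCoeff_apply, hc7, mul_comm]

/-- Generic symmetric case. -/
theorem generic_symmetric
    (l1 l2 l3 l4 l5 l6 : PowerSeries ℝ)
    (v1 v3 v5 v7 : PowerSeries ℝ)
    (hv1 : v1 = l1)
    (hv3 : v3 = l5 * (l3 - l6))
    (hv5 : v5 = l2 * l4 * (l3 - l6) * (l4 + 5 * l3 - 5 * l6))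
    (hv7 : v7 = l2 * l4 * (l3 - l6) ^ 2 * (l3 * l6 - 2 * l6 ^ 2 - l2 ^ 2))
    (h10 : coeff 0 l1 = 0)
    (h20 : coeff 0 l2 = 0)
    (h50 : coeff 0 l5 = 0)
    (hgen1 : coeff 0 l4 * (coeff 0 l3 - coeff 0 l6) ≠ 0)
    (hgen2 : (coeff 0 l4 + 5 * coeff 0 l3 - 5 * coeff 0 l6) ^ 2
        + (coeff 0 l3 * coeff 0 l6 - 2 * (coeff 0 l6) ^ 2) ^ 2 ≠ 0)
    (k : ℕ) (hk : 1 ≤ k)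
    (hvan : ∀ j < k, coeff j v1 = 0 ∧ coeff j v3 = 0 ∧ coeff j v5 = 0 ∧ coeff j v7 = 0) :
    coeff k v1 = coeff k l1 ∧
    coeff k v3 = (coeff 0 l3 - coeff 0 l6) * coeff k l5 ∧
    coeff k v5 = coeff 0 l4 * (coeff 0 l3 - coeff 0 l6)
      * (coeff 0 l4 + 5 * coeff 0 l3 - 5 * coeff 0 l6) * coeff k l2 ∧
    coeff k v7 = coeff 0 l4 * (coeff 0 l3 - coeff 0 l6) ^ 2
      * (coeff 0 l3 * coeff 0 l6 - 2 * (coeff 0 l6) ^ 2) * coeff k l2 :=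
  generic_symmetric_general l1 l2 l3 l4 l5 l6 v1 v3 v5 v7 hv1 hv3 hv5 hv7 h20 hgen1 hgen2 k hvan
end

section
/- (Symmetric Darboux case.) Assume λ_{1,0} = λ_{2,0} = λ_{5,0} = 0, λ_{4,0}+5λ_{3,0}−5λ_{6,0} = 0, λ_{3,0}λ_{6,0}−2λ_{6,0}² = 0, and λ_{4,0} ≠ 0. Then λ_{3,0} ≠ λ_{6,0} and λ_{3,0} ≠ 0; moreover v̄_{1,1} = λ_{1,1}, v̄_{3,1} = (λ_{3,0} − λ_{6,0}) λ_{5,1}, and v̄_{5,1} = v̄_{7,1} = 0. If in addition λ_{1,1} = λ_{5,1} = 0, then v̄_{1,2} = λ_{1,2}, v̄_{3,2} = (λ_{3,0} − λ_{6,0}) λ_{5,2}, v̄_{5,2} = λ_{4,0}(λ_{3,0} − λ_{6,0}) λ_{2,1}(λ_{4,1}+5λ_{3,1}−5λ_{6,1}), and v̄_{7,2} = λ_{4,0}(λ_{3,0} − λ_{6,0})² λ_{2,1}(λ_{3,0}λ_{6,1}+λ_{6,0}λ_{3,1}−4λ_{6,0}λ_{6,1}). -/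
/-!
The first Darboux condition and `λ₄,₀ ≠ 0` give `λ₃,₀ ≠ λ₆,₀`, and then the second gives `λ₃,₀ ≠ 0`.
Both higher constants factor through a Darboux factor vanishing at `ε = 0`:
`v₅ = λ₂ · (λ₄ + 5λ₃ - 5λ₆) · λ₄(λ₃ - λ₆)` and `v₇ = λ₂ · (λ₃λ₆ - 2λ₆² - λ₂²) · λ₄(λ₃ - λ₆)²`.
Since `λ₂` also vanishes at `ε = 0`, each is `ε²` times a power series, so its `ε`-coefficient
vanishes and its `ε²`-coefficient is the product of the two `ε`-coefficients times the constant
term of the remaining factor. The same reasoning with `ε ∣ λ₅` (and `ε² ∣ λ₅`) handles `v₃`.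
-/

open PowerSeries

namespace PowerSeries

section Semiring

variable {R : Type*} [Semiring R]

@[simp]
theorem coeff_ofNat_mul (k n : ℕ) [k.AtLeastTwo] (f : R⟦X⟧) :
    coeff n (ofNat(k) * f) = ofNat(k) * coeff n f := by
  rw [← map_ofNat C k, coeff_C_mul]

@[simp]
theorem constantCoeff_ofNat (k : ℕ) [k.AtLeastTwo] : constantCoeff (ofNat(k) : R⟦X⟧) = ofNat(k) :=
  map_ofNat _ k

theorem coeff_X_pow_mul_self (n : ℕ) (f : R⟦X⟧) : coeff n (X ^ n * f) = constantCoeff f := by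
  simpa using coeff_X_pow_mul f n 0

end Semiring

variable {R : Type*} [CommSemiring R]

theorem coeff_add_mul_of_X_pow_dvd {m n : ℕ} {f g : R⟦X⟧} (hf : X ^ m ∣ f) (hg : X ^ n ∣ g) :
    coeff (m + n) (f * g) = coeff m f * coeff n g := by
  obtain ⟨f, rfl⟩ := hf
  obtain ⟨g, rfl⟩ := hg
  rw [mul_mul_mul_comm, ← pow_add, coeff_X_pow_mul_self, coeff_X_pow_mul_self,
    coeff_X_pow_mul_self, map_mul]

theorem coeff_mul_of_X_pow_dvd_left {n : ℕ} {f : R⟦X⟧} (hf : X ^ n ∣ f) (g : R⟦X⟧) :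
    coeff n (f * g) = coeff n f * constantCoeff g := by
  simpa using coeff_add_mul_of_X_pow_dvd (n := 0) hf (by simp)

theorem coeff_one_mul_mul_of_X_dvd {f g : R⟦X⟧} (hf : X ∣ f) (hg : X ∣ g) (h : R⟦X⟧) :
    coeff 1 (f * g * h) = 0 := by
  have : X ^ 2 ∣ f * g * h := dvd_mul_of_dvd_left (pow_two (X : R⟦X⟧) ▸ mul_dvd_mul hf hg) h
  exact X_pow_dvd_iff.1 this 1 one_lt_two

theorem coeff_two_mul_mul_of_X_dvd {f g : R⟦X⟧} (hf : X ∣ f) (hg : X ∣ g) (h : R⟦X⟧) :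
    coeff 2 (f * g * h) = coeff 1 f * coeff 1 g * constantCoeff h := by
  rw [coeff_mul_of_X_pow_dvd_left (pow_two (X : R⟦X⟧) ▸ mul_dvd_mul hf hg),
    coeff_add_mul_of_X_pow_dvd (m := 1) (n := 1) (by simpa) (by simpa)]

end PowerSeries

theorem symmetric_darboux_general
    (l1 l2 l3 l4 l5 l6 : PowerSeries ℝ)
    (v1 v3 v5 v7 : PowerSeries ℝ)
    (hv1 : v1 = l1)
    (hv3 : v3 = l5 * (l3 - l6))
    (hv5 : v5 = l2 * l4 * (l3 - l6) * (l4 + 5 * l3 - 5 * l6))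
    (hv7 : v7 = l2 * l4 * (l3 - l6) ^ 2 * (l3 * l6 - 2 * l6 ^ 2 - l2 ^ 2))
    (h20 : coeff 0 l2 = 0)
    (h50 : coeff 0 l5 = 0)
    (hD1 : coeff 0 l4 + 5 * coeff 0 l3 - 5 * coeff 0 l6 = 0)
    (hD2 : coeff 0 l3 * coeff 0 l6 - 2 * (coeff 0 l6) ^ 2 = 0)
    (h40 : coeff 0 l4 ≠ 0) :
    coeff 0 l3 ≠ coeff 0 l6 ∧ coeff 0 l3 ≠ 0 ∧
    coeff 1 v1 = coeff 1 l1 ∧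
    coeff 1 v3 = (coeff 0 l3 - coeff 0 l6) * coeff 1 l5 ∧
    coeff 1 v5 = 0 ∧ coeff 1 v7 = 0 ∧
    (coeff 1 l1 = 0 → coeff 1 l5 = 0 →
      coeff 2 v1 = coeff 2 l1 ∧
      coeff 2 v3 = (coeff 0 l3 - coeff 0 l6) * coeff 2 l5 ∧
      coeff 2 v5 = coeff 0 l4 * (coeff 0 l3 - coeff 0 l6) * coeff 1 l2
        * (coeff 1 l4 + 5 * coeff 1 l3 - 5 * coeff 1 l6) ∧
      coeff 2 v7 = coeff 0 l4 * (coeff 0 l3 - coeff 0 l6) ^ 2 * coeff 1 l2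
        * (coeff 0 l3 * coeff 1 l6 + coeff 0 l6 * coeff 1 l3 - 4 * coeff 0 l6 * coeff 1 l6)) := by
  subst hv1 hv3 hv5 hv7
  rw [coeff_zero_eq_constantCoeff] at h20 h50 hD1 hD2 h40 ⊢
  have h36 : constantCoeff l3 ≠ constantCoeff l6 := fun h => h40 (by linear_combination hD1 - 5 * h)
  have h3 : constantCoeff l3 ≠ 0 := by
    intro h
    have h6 : constantCoeff l6 = 0 := by simpa [h] using hD2
    exact h36 (h.trans h6.symm)
  have hX_l2 : X ∣ l2 := X_dvd_iff.2 h20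
  have hX_l5 : X ^ 1 ∣ l5 := by simpa [X_dvd_iff] using h50
  have hX_D1 : X ∣ l4 + 5 * l3 - 5 * l6 := X_dvd_iff.2 (by simpa using hD1)
  have hX_D2 : X ∣ l3 * l6 - 2 * l6 ^ 2 - l2 ^ 2 := X_dvd_iff.2 (by simpa [h20] using hD2)
  rw [show l2 * l4 * (l3 - l6) * (l4 + 5 * l3 - 5 * l6)
      = l2 * (l4 + 5 * l3 - 5 * l6) * (l4 * (l3 - l6)) by ring,
    show l2 * l4 * (l3 - l6) ^ 2 * (l3 * l6 - 2 * l6 ^ 2 - l2 ^ 2)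
      = l2 * (l3 * l6 - 2 * l6 ^ 2 - l2 ^ 2) * (l4 * (l3 - l6) ^ 2) by ring]
  refine ⟨h36, h3, rfl, ?_, coeff_one_mul_mul_of_X_dvd hX_l2 hX_D1 _,
    coeff_one_mul_mul_of_X_dvd hX_l2 hX_D2 _, fun _ h51 => ⟨rfl, ?_, ?_, ?_⟩⟩
  · rw [coeff_mul_of_X_pow_dvd_left hX_l5, map_sub, mul_comm]
  · have hX2_l5 : X ^ 2 ∣ l5 := X_pow_dvd_iff.2 fun m hm => by
      interval_cases m <;> simp [h50, h51]
    rw [coeff_mul_of_X_pow_dvd_left hX2_l5, map_sub, mul_comm]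
  · rw [coeff_two_mul_mul_of_X_dvd hX_l2 hX_D1]
    simp only [map_sub, map_add, map_mul, coeff_ofNat_mul]
    ring
  · rw [coeff_two_mul_mul_of_X_dvd hX_l2 hX_D2]
    simp only [map_sub, map_mul, map_pow, coeff_one_mul, coeff_ofNat_mul, coeff_one_pow, h20]
    ring

/-- Symmetric Darboux case. -/
theorem symmetric_darboux
    (l1 l2 l3 l4 l5 l6 : PowerSeries ℝ)
    (v1 v3 v5 v7 : PowerSeries ℝ)
    (hv1 : v1 = l1)
    (hv3 : v3 = l5 * (l3 - l6))
    (hv5 : v5 = l2 * l4 * (l3 - l6) * (l4 + 5 * l3 - 5 * l6))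
    (hv7 : v7 = l2 * l4 * (l3 - l6) ^ 2 * (l3 * l6 - 2 * l6 ^ 2 - l2 ^ 2))
    (h10 : coeff 0 l1 = 0)
    (h20 : coeff 0 l2 = 0)
    (h50 : coeff 0 l5 = 0)
    (hD1 : coeff 0 l4 + 5 * coeff 0 l3 - 5 * coeff 0 l6 = 0)
    (hD2 : coeff 0 l3 * coeff 0 l6 - 2 * (coeff 0 l6) ^ 2 = 0)
    (h40 : coeff 0 l4 ≠ 0) :
    coeff 0 l3 ≠ coeff 0 l6 ∧ coeff 0 l3 ≠ 0 ∧
    coeff 1 v1 = coeff 1 l1 ∧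
    coeff 1 v3 = (coeff 0 l3 - coeff 0 l6) * coeff 1 l5 ∧
    coeff 1 v5 = 0 ∧ coeff 1 v7 = 0 ∧
    (coeff 1 l1 = 0 → coeff 1 l5 = 0 →
      coeff 2 v1 = coeff 2 l1 ∧
      coeff 2 v3 = (coeff 0 l3 - coeff 0 l6) * coeff 2 l5 ∧
      coeff 2 v5 = coeff 0 l4 * (coeff 0 l3 - coeff 0 l6) * coeff 1 l2
        * (coeff 1 l4 + 5 * coeff 1 l3 - 5 * coeff 1 l6) ∧
      coeff 2 v7 = coeff 0 l4 * (coeff 0 l3 - coeff 0 l6) ^ 2 * coeff 1 l2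
        * (coeff 0 l3 * coeff 1 l6 + coeff 0 l6 * coeff 1 l3 - 4 * coeff 0 l6 * coeff 1 l6)) :=
  symmetric_darboux_general l1 l2 l3 l4 l5 l6 v1 v3 v5 v7 hv1 hv3 hv5 hv7 h20 h50 hD1 hD2 h40
end
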